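/- arXiv:2106.06259 — 3 statements merged into one kernel-verified Lean document; each statement's English description precedes it below -/
import Mathlib

section
/- Finite-step Moser iteration inequality. Let β > 1 be a real number, C ≥ 1 a constant, μ a measure on a measurable space X, and f : X → ℝ measurable with f ≥ 0 μ-a.e. Let p ≥ 1 be a real number with ‖f‖_{L^p(μ)} < ∞, and assume that for every real q ≥ 1, ‖f‖_{L^{qβ}(μ)} ≤ (q C)^{1/q} ‖f‖_{L^q(μ)}. Then for every natural number k, ‖f‖_{L^{pβ^k}(μ)} ≤ p^{S_k/p} · β^{T_k/p} · C^{S_k/p} · ‖f‖_{L^p(μ)}, where S_k := Σ_{j=0}^{k−1} β^{−j} and T_k := Σ_{j=0}^{k−1} j·β^{−j}. -/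
open MeasureTheory

/-- The `L^p`-norm `(∫ |f|^p dμ)^(1/p)` for a real exponent `0 < p < ∞`. -/
noncomputable def lpNorm {X : Type*} [MeasurableSpace X] (μ : Measure X)
    (f : X → ℝ) (p : ℝ) : ℝ :=
  (∫ x, |f x| ^ p ∂μ) ^ (1 / p)

/-!
At the exponent `q_j = p β^j` the one-step inequality costs the factor
`(q_j C)^(1/q_j) = p^(β^{-j}/p) β^(j β^{-j}/p) C^(β^{-j}/p)`; chaining the steps
`j = 0, …, k - 1` multiplies these factors, and their exponents add up to `S_k / p` and `T_k / p`.
-/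

open Finset

theorem le_prod_range_mul_of_le_mul {a c : ℕ → ℝ} (hc : ∀ k, 0 ≤ c k)
    (h : ∀ k, a (k + 1) ≤ c k * a k) (k : ℕ) :
    a k ≤ (∏ j ∈ range k, c j) * a 0 := by
  induction k with
  | zero => simp
  | succ k ih =>
    calc a (k + 1) ≤ c k * a k := h k
      _ ≤ c k * ((∏ j ∈ range k, c j) * a 0) := mul_le_mul_of_nonneg_left ih (hc k)
      _ = (∏ j ∈ range (k + 1), c j) * a 0 := by rw [prod_range_succ]; ring

theorem mul_pow_mul_rpow_inv {p β C : ℝ} (hp : 0 < p) (hβ : 0 < β) (hC : 0 ≤ C) (j : ℕ) :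
    (p * β ^ j * C) ^ (1 / (p * β ^ j))
      = p ^ ((1 / β) ^ j / p) * β ^ ((j : ℝ) * (1 / β) ^ j / p) * C ^ ((1 / β) ^ j / p) := by
  have hexp : 1 / (p * β ^ j) = (1 / β) ^ j / p := by rw [one_div_pow]; field_simp
  rw [Real.mul_rpow (by positivity) hC, Real.mul_rpow hp.le (by positivity), hexp,
    ← Real.rpow_natCast β j, ← Real.rpow_mul hβ.le, mul_div_assoc]

theorem prod_range_mul_pow_mul_rpow_inv {p β C : ℝ} (hp : 0 < p) (hβ : 0 < β) (hC : 0 < C)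
    (k : ℕ) :
    ∏ j ∈ range k, (p * β ^ j * C) ^ (1 / (p * β ^ j))
      = p ^ ((∑ j ∈ range k, (1 / β) ^ j) / p)
        * β ^ ((∑ j ∈ range k, (j : ℝ) * (1 / β) ^ j) / p)
        * C ^ ((∑ j ∈ range k, (1 / β) ^ j) / p) := by
  simp only [mul_pow_mul_rpow_inv hp hβ hC.le, prod_mul_distrib, sum_div,
    Real.rpow_sum_of_pos hp, Real.rpow_sum_of_pos hβ, Real.rpow_sum_of_pos hC]

theorem moser_iteration_finite_step_general
    {X : Type*} [MeasurableSpace X] (μ : Measure X)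
    (β : ℝ) (hβ : 1 < β) (C : ℝ) (hC : 1 ≤ C)
    (f : X → ℝ)
    (p : ℝ) (hp : 1 ≤ p)
    (H : ∀ q : ℝ, 1 ≤ q →
      lpNorm μ f (q * β) ≤ (q * C) ^ (1 / q) * lpNorm μ f q) :
    ∀ k : ℕ,
      lpNorm μ f (p * β ^ k)
        ≤ p ^ ((∑ j ∈ Finset.range k, (1 / β) ^ j) / p)
          * β ^ ((∑ j ∈ Finset.range k, (j : ℝ) * (1 / β) ^ j) / p)
          * C ^ ((∑ j ∈ Finset.range k, (1 / β) ^ j) / p)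
          * lpNorm μ f p := by
  have hp0 : 0 < p := by linarith
  have hβ0 : 0 < β := by linarith
  have hC0 : 0 < C := by linarith
  have hstep (j : ℕ) : lpNorm μ f (p * β ^ (j + 1))
      ≤ (p * β ^ j * C) ^ (1 / (p * β ^ j)) * lpNorm μ f (p * β ^ j) := by
    rw [pow_succ, ← mul_assoc]
    exact H _ (one_le_mul_of_one_le_of_one_le hp (one_le_pow₀ hβ.le))
  intro k
  rw [← prod_range_mul_pow_mul_rpow_inv hp0 hβ0 hC0]
  simpa only [pow_zero, mul_one] using
    le_prod_range_mul_of_le_mul (a := fun j => lpNorm μ f (p * β ^ j)) (fun j => by positivity)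
      hstep k

/-- Finite-step Moser iteration inequality. -/
theorem moser_iteration_finite_step
    {X : Type*} [MeasurableSpace X] (μ : Measure X)
    (β : ℝ) (hβ : 1 < β) (C : ℝ) (hC : 1 ≤ C)
    (f : X → ℝ) (hfmeas : Measurable f) (hf0 : ∀ᵐ x ∂μ, 0 ≤ f x)
    (p : ℝ) (hp : 1 ≤ p) (hfp : Integrable (fun x => |f x| ^ p) μ)
    (H : ∀ q : ℝ, 1 ≤ q →
      lpNorm μ f (q * β) ≤ (q * C) ^ (1 / q) * lpNorm μ f q) :
    ∀ k : ℕ,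
      lpNorm μ f (p * β ^ k)
        ≤ p ^ ((∑ j ∈ Finset.range k, (1 / β) ^ j) / p)
          * β ^ ((∑ j ∈ Finset.range k, (j : ℝ) * (1 / β) ^ j) / p)
          * C ^ ((∑ j ∈ Finset.range k, (1 / β) ^ j) / p)
          * lpNorm μ f p :=
  moser_iteration_finite_step_general μ β hβ C hC f p hp H
end

section
/- L¹ bound from a Poincaré-type variance control on a sublevel-set-charged function. Let μ be a finite measure on a measurable space X with total mass V := μ(X) > 0. Let g : X → ℝ be measurable with g ≥ 0 μ-a.e. and g ∈ L²(μ), and set m := (1/V)∫_X g dμ. Let a ≥ 0, δ > 0 and C ≥ 0, and assume: (i) μ({x ∈ X : g(x) < a}) ≥ δ; (ii) ∫_X (g − m)² dμ ≤ C ∫_X g dμ. Then ∫_X g dμ ≤ (a₀/2 + (b₀ + a₀²/4)^{1/2})², where a₀ := V^{3/2} C^{1/2} / δ and b₀ := a·V² / δ. -/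
/-!
On the sublevel set `{g < a}`, of measure at least `δ`, the mean `m` exceeds `g` by at least
`m - a`, so `(m - a) δ ≤ ∫ |g - m|`. Cauchy–Schwarz and the variance bound give
`∫ |g - m| ≤ √V · √(C ∫ g)`, hence `I := ∫ g = V m` satisfies `I ≤ a V + a₀ √I ≤ b₀ + a₀ √I`,
a quadratic inequality in `√I` which is solved by completing the square.
-/

open MeasureTheory

lemma le_sq_of_le_add_mul_sqrt {I a b : ℝ} (hI : 0 ≤ I) (h : I ≤ b + a * √I) :
    I ≤ (a / 2 + √(b + a ^ 2 / 4)) ^ 2 := by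
  have hsq : (√I - a / 2) ^ 2 ≤ b + a ^ 2 / 4 := by
    nlinarith [Real.sq_sqrt hI]
  have hroot : √I ≤ a / 2 + √(b + a ^ 2 / 4) := by
    have := Real.abs_le_sqrt hsq
    linarith [le_abs_self (√I - a / 2)]
  calc I = √I ^ 2 := (Real.sq_sqrt hI).symm
    _ ≤ _ := pow_le_pow_left₀ (Real.sqrt_nonneg I) hroot 2

section

variable {X : Type*} [MeasurableSpace X] {μ : Measure X} [IsFiniteMeasure μ]

lemma integral_abs_le_sqrt_measureReal_mul_sqrt_integral_sq {f : X → ℝ} (hf : MemLp f 2 μ) :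
    ∫ x, |f x| ∂μ ≤ √(μ.real Set.univ) * √(∫ x, f x ^ 2 ∂μ) := by
  have hpq : Real.HolderConjugate 2 2 := by constructor <;> norm_num
  have hofReal : ENNReal.ofReal 2 = 2 := by norm_num
  have hCS := integral_mul_norm_le_Lp_mul_Lq (μ := μ) hpq
    (hofReal ▸ memLp_const (1 : ℝ) : MemLp (fun _ => (1 : ℝ)) (ENNReal.ofReal 2) μ)
    (hofReal ▸ hf : MemLp f (ENNReal.ofReal 2) μ)
  simp only [norm_one, one_mul, Real.norm_eq_abs, one_pow, Real.rpow_two, sq_abs,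
    integral_const, smul_eq_mul, mul_one] at hCS
  simpa only [Real.sqrt_eq_rpow] using hCS

lemma sub_mul_measureReal_le_integral_abs_sub {f : X → ℝ} (hf : Integrable f μ)
    (hmeas : Measurable f) (a c : ℝ) :
    (c - a) * μ.real {x | f x < a} ≤ ∫ x, |f x - c| ∂μ := by
  set S := {x | f x < a}
  have habs : Integrable (fun x => |f x - c|) μ := (hf.sub (integrable_const c)).abs
  calc (c - a) * μ.real S = ∫ _ in S, (c - a) ∂μ := by rw [setIntegral_const, smul_eq_mul, mul_comm]
    _ ≤ ∫ x in S, |f x - c| ∂μ := by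
      refine setIntegral_mono_on (integrable_const _).integrableOn habs.integrableOn
        (measurableSet_lt hmeas measurable_const) fun x hx => ?_
      have : f x < a := hx
      linarith [neg_abs_le (f x - c)]
    _ ≤ ∫ x, |f x - c| ∂μ :=
      setIntegral_le_integral habs (Filter.Eventually.of_forall fun x => abs_nonneg _)

lemma sub_le_integral_abs_sub_div {f : X → ℝ} (hf : Integrable f μ) (hmeas : Measurable f)
    {a c δ : ℝ} (hδ : 0 < δ) (hsub : δ ≤ μ.real {x | f x < a}) :
    c - a ≤ (∫ x, |f x - c| ∂μ) / δ := by
  have hmass := sub_mul_measureReal_le_integral_abs_sub hf hmeas a c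
  rw [le_div_iff₀ hδ]
  have hdev : 0 ≤ ∫ x, |f x - c| ∂μ := integral_nonneg fun x => abs_nonneg _
  rcases le_or_gt c a with hca | hac
  · nlinarith
  · nlinarith

end

/-- `L¹` bound from a Poincaré-type variance control on a
sublevel-set-charged function. -/
theorem L1_bound_from_variance_control
    {X : Type*} [MeasurableSpace X] (μ : Measure X) [IsFiniteMeasure μ]
    (V : ℝ) (hV : V = (μ Set.univ).toReal) (hVpos : 0 < V)
    (g : X → ℝ) (hgmeas : Measurable g) (hg0 : ∀ᵐ x ∂μ, 0 ≤ g x)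
    (hgL2 : MemLp g 2 μ)
    (m : ℝ) (hm : m = (1 / V) * ∫ x, g x ∂μ)
    (a δ C : ℝ) (ha : 0 ≤ a) (hδ : 0 < δ) (hC : 0 ≤ C)
    (h1 : δ ≤ (μ {x | g x < a}).toReal)
    (h2 : ∫ x, (g x - m) ^ 2 ∂μ ≤ C * ∫ x, g x ∂μ)
    (a₀ b₀ : ℝ)
    (ha₀ : a₀ = V ^ ((3 : ℝ) / 2) * Real.sqrt C / δ)
    (hb₀ : b₀ = a * V ^ 2 / δ) :
    ∫ x, g x ∂μ ≤ (a₀ / 2 + Real.sqrt (b₀ + a₀ ^ 2 / 4)) ^ 2 := by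
  set I := ∫ x, g x ∂μ
  have hI : I = V * m := by rw [hm]; field_simp
  have hL1 : ∫ x, |g x - m| ∂μ ≤ √V * (√C * √I) := by
    rw [← Real.sqrt_mul hC]
    refine (integral_abs_le_sqrt_measureReal_mul_sqrt_integral_sq (f := fun x => g x - m)
      (hgL2.sub (memLp_const m))).trans ?_
    rw [show μ.real Set.univ = V from hV.symm]
    gcongr
  have hmean : m - a ≤ √V * (√C * √I) / δ :=
    (sub_le_integral_abs_sub_div (hgL2.integrable one_le_two) hgmeas hδ h1).trans (by gcongr)
  have hδV : δ ≤ V := h1.trans (hV ▸ measureReal_mono (Set.subset_univ _))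
  have haV : a * V ≤ b₀ := by
    rw [hb₀, le_div_iff₀ hδ]
    nlinarith [mul_nonneg ha hVpos.le]
  have hV32 : V ^ ((3 : ℝ) / 2) = V * √V := by
    rw [show (3 : ℝ) / 2 = 1 + 1 / 2 by norm_num, Real.rpow_add hVpos, Real.rpow_one,
      Real.sqrt_eq_rpow]
  refine le_sq_of_le_add_mul_sqrt (integral_nonneg_of_ae hg0) ?_
  calc I = V * m := hI
    _ ≤ V * (a + √V * (√C * √I) / δ) := by gcongr; linarith
    _ = a * V + a₀ * √I := by rw [ha₀, hV32]; ring
    _ ≤ b₀ + a₀ * √I := by linarith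
end

section
/- Sublevel-set volume bound for a function normalized by its essential infimum, under a Moser-iteration hypothesis. Let n ≥ 2 be an integer and β = n/(n−1). Let μ be a finite measure on a measurable space X with V := μ(X), let C₁ ≥ 1, and let ρ : X → ℝ be measurable with ρ ≥ 1 μ-a.e. and essential infimum essinf_μ ρ = 1. Assume that for every real p ≥ 1, ‖ρ⁻¹‖_{L^{pβ}(μ)} ≤ (p C₁)^{1/p} ‖ρ⁻¹‖_{L^p(μ)}. Set δ := 1/(2 β^{n(n−1)} C₁^n). Then ∫_X ρ⁻¹ dμ ≥ 2δ, and μ({x ∈ X : ρ(x) < V/δ}) ≥ δ. -/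
open MeasureTheory

/-!
Iterating the reverse Hölder inequality along the exponents `β ^ N` bounds
`‖ρ⁻¹‖_{L^{β^N}}` by `∏_{k<N} (β ^ k C₁) ^ (β ^ -k) · ∫ ρ⁻¹`, and summing the series
`∑ β ^ -k = n` and `∑ k β ^ -k = n (n - 1)` in the exponents bounds the product by
`β ^ (n (n - 1)) C₁ ^ n = 1 / (2δ)`. As `N → ∞` the left side tends to `esssup ρ⁻¹ = 1`,
so `∫ ρ⁻¹ ≥ 2δ`. Since `ρ⁻¹ ≤ 1` a.e. and `ρ⁻¹ ≤ δ / V` off `{ρ < V / δ}`,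
also `∫ ρ⁻¹ ≤ μ {ρ < V / δ} + δ`.
-/

open Filter Topology Finset

section GeometricSums

variable {r : ℝ}

theorem sum_range_pow_le_of_lt_one (hr₀ : 0 ≤ r) (hr₁ : r < 1) (N : ℕ) :
    ∑ k ∈ range N, r ^ k ≤ 1 / (1 - r) := by
  simpa using geom_sum_Ico_le_of_lt_one (m := 0) (n := N) hr₀ hr₁

theorem sum_range_mul_pow_le_of_lt_one (hr₀ : 0 ≤ r) (hr₁ : r < 1) (N : ℕ) :
    ∑ k ∈ range N, (k : ℝ) * r ^ k ≤ r / (1 - r) ^ 2 := by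
  have hr : ‖r‖ < 1 := by rwa [Real.norm_of_nonneg hr₀]
  rw [← tsum_coe_mul_geometric_of_norm_lt_one hr]
  exact (hasSum_coe_mul_geometric_of_norm_lt_one hr).summable.sum_le_tsum _
    fun k _ => by positivity

end GeometricSums

theorem moser_product_le {β C : ℝ} (hβ : 1 < β) (hC : 1 ≤ C) (N : ℕ) :
    ∏ k ∈ range N, (β ^ k * C) ^ (1 / β ^ k) ≤ β ^ (β / (β - 1) ^ 2) * C ^ (β / (β - 1)) := by
  set r := β⁻¹
  have hr₀ : 0 ≤ r := by positivity
  have hr₁ : r < 1 := inv_lt_one_of_one_lt₀ hβ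
  have hβ₀ : 0 < β := by linarith
  have hfactor (k : ℕ) : (β ^ k * C) ^ (1 / β ^ k) = β ^ ((k : ℝ) * r ^ k) * C ^ (r ^ k) := by
    rw [one_div, ← inv_pow, Real.mul_rpow (by positivity) (by linarith), ← Real.rpow_natCast,
      ← Real.rpow_mul hβ₀.le]
  have hβ₁ : β - 1 ≠ 0 := by linarith
  have hsum₁ : 1 / (1 - r) = β / (β - 1) := by
    simp only [r]; field_simp
  have hsum₂ : r / (1 - r) ^ 2 = β / (β - 1) ^ 2 := by
    simp only [r]; field_simp
  calc ∏ k ∈ range N, (β ^ k * C) ^ (1 / β ^ k)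
      = β ^ (∑ k ∈ range N, (k : ℝ) * r ^ k) * C ^ (∑ k ∈ range N, r ^ k) := by
        simp only [hfactor, prod_mul_distrib, Real.rpow_sum_of_pos hβ₀,
          Real.rpow_sum_of_pos (zero_lt_one.trans_le hC)]
    _ ≤ β ^ (β / (β - 1) ^ 2) * C ^ (β / (β - 1)) := by
        rw [← hsum₁, ← hsum₂]
        gcongr
        · exact hβ.le
        · exact sum_range_mul_pow_le_of_lt_one hr₀ hr₁ N
        · exact sum_range_pow_le_of_lt_one hr₀ hr₁ N

theorem moser_exponents_eq {n : ℕ} (hn : 1 < n) {β : ℝ} (hβ : β = n / (n - 1)) (C : ℝ) :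
    β ^ (β / (β - 1) ^ 2) * C ^ (β / (β - 1)) = β ^ (n * (n - 1)) * C ^ n := by
  have hn₁ : (n : ℝ) - 1 ≠ 0 := sub_ne_zero.2 (by exact_mod_cast hn.ne')
  have h₁ : β / (β - 1) = n := by rw [hβ]; field_simp; ring
  have h₂ : β / (β - 1) ^ 2 = ((n * (n - 1) : ℕ) : ℝ) := by
    rw [Nat.cast_mul, Nat.cast_sub hn.le, hβ]; field_simp; ring
  rw [h₁, h₂, Real.rpow_natCast, Real.rpow_natCast]

section LpNorm

variable {X : Type*} [MeasurableSpace X] {μ : Measure X}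

theorem lpNorm_nonneg (f : X → ℝ) (p : ℝ) : 0 ≤ lpNorm μ f p :=
  Real.rpow_nonneg (integral_nonneg fun _ => by positivity) _

theorem lpNorm_one_of_nonneg {f : X → ℝ} (hf : 0 ≤ᵐ[μ] f) : lpNorm μ f 1 = ∫ x, f x ∂μ := by
  rw [_root_.lpNorm, div_one, Real.rpow_one]
  exact integral_congr_ae (hf.mono fun x hx => by simp [abs_of_nonneg hx])

theorem lpNorm_pow_le_prod_mul_lpNorm_one {f : X → ℝ} {β C : ℝ} (hβ : 1 ≤ β) (hC : 0 ≤ C)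
    (H : ∀ p : ℝ, 1 ≤ p → lpNorm μ f (p * β) ≤ (p * C) ^ (1 / p) * lpNorm μ f p) (N : ℕ) :
    lpNorm μ f (β ^ N) ≤ (∏ k ∈ range N, (β ^ k * C) ^ (1 / β ^ k)) * lpNorm μ f 1 := by
  induction N with
  | zero => simp
  | succ N ih =>
    calc lpNorm μ f (β ^ (N + 1))
        ≤ (β ^ N * C) ^ (1 / β ^ N) * lpNorm μ f (β ^ N) := by
          rw [pow_succ]; exact H _ (one_le_pow₀ hβ)
      _ ≤ (β ^ N * C) ^ (1 / β ^ N) *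
            ((∏ k ∈ range N, (β ^ k * C) ^ (1 / β ^ k)) * lpNorm μ f 1) := by
          gcongr
      _ = (∏ k ∈ range (N + 1), (β ^ k * C) ^ (1 / β ^ k)) * lpNorm μ f 1 := by
          rw [prod_range_succ]; ring

theorem mul_measureReal_rpow_le_lpNorm [IsFiniteMeasure μ] {f : X → ℝ} {s : Set X} {q t : ℝ}
    (hq : 0 < q) (ht : 0 ≤ t) (hf : Integrable (fun x => |f x| ^ q) μ)
    (hs : ∀ᵐ x ∂μ, x ∈ s → t ≤ |f x|) :
    t * μ.real s ^ (1 / q) ≤ lpNorm μ f q := by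
  have hsub : μ.real s ≤ μ.real {x | t ^ q ≤ |f x| ^ q} :=
    ENNReal.toReal_mono (measure_ne_top _ _) <| measure_mono_ae <| hs.mono fun x hx hxs =>
      Real.rpow_le_rpow ht (hx hxs) hq.le
  have hmarkov : t ^ q * μ.real s ≤ ∫ x, |f x| ^ q ∂μ :=
    (by gcongr : t ^ q * μ.real s ≤ _).trans
      (mul_meas_ge_le_integral_of_nonneg (ae_of_all _ fun _ => by positivity) hf _)
  calc t * μ.real s ^ (1 / q) = (t ^ q * μ.real s) ^ (1 / q) := by
        rw [Real.mul_rpow (by positivity) measureReal_nonneg, ← Real.rpow_mul ht,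
          mul_one_div_cancel hq.ne', Real.rpow_one]
    _ ≤ lpNorm μ f q := by unfold _root_.lpNorm; gcongr

/- In `ℝ`, `essInf` is the `sSup` of `{a | μ {f < a} = 0}`, which is `0` when that set is
unbounded, e.g. when `μ = 0`. -/
theorem measure_lt_ne_zero_of_essInf_lt {f : X → ℝ} {c : ℝ} (h₀ : essInf f μ ≠ 0)
    (hc : essInf f μ < c) : μ {x | f x < c} ≠ 0 := by
  intro hnull
  rw [essInf_eq_sSup] at h₀ hc
  by_cases hbdd : BddAbove {a | μ {x | f x < a} = 0}
  · exact (le_csSup hbdd hnull).not_gt hc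
  · exact h₀ (Real.sSup_of_not_bddAbove hbdd)

theorem one_le_of_eventually_lpNorm_inv_le [IsFiniteMeasure μ] {ρ : X → ℝ} (hρ : Measurable ρ)
    (hρ₁ : ∀ᵐ x ∂μ, 1 ≤ ρ x) (hess : essInf ρ μ = 1) {ι : Type*} {l : Filter ι} [l.NeBot]
    {q : ι → ℝ} (hq : Tendsto q l atTop) {M : ℝ}
    (hM : ∀ᶠ i in l, lpNorm μ (fun x => (ρ x)⁻¹) (q i) ≤ M) : 1 ≤ M := by
  suffices h : ∀ c > 1, c⁻¹ ≤ M by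
    have hlim : Tendsto (fun c : ℝ => c⁻¹) (𝓝[>] 1) (𝓝 1) := by
      simpa using (continuousAt_inv₀ (one_ne_zero' ℝ)).tendsto.mono_left nhdsWithin_le_nhds
    exact le_of_tendsto hlim (eventually_nhdsWithin_of_forall h)
  intro c hc
  set m := μ.real {x | ρ x < c}
  have hm : 0 < m := ENNReal.toReal_pos
    (measure_lt_ne_zero_of_essInf_lt (by rw [hess]; norm_num) (by rwa [hess])) (measure_ne_top _ _)
  have hlim : Tendsto (fun i => c⁻¹ * m ^ (1 / q i)) l (𝓝 c⁻¹) := by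
    have h : Tendsto (fun i => m ^ (1 / q i)) l (𝓝 1) := by
      simpa [Function.comp_def] using (Real.continuousAt_const_rpow hm.ne').tendsto.comp
        ((tendsto_const_nhds (x := (1 : ℝ))).div_atTop hq)
    simpa using h.const_mul c⁻¹
  have hlower : ∀ p ≥ 1, c⁻¹ * m ^ (1 / p) ≤ lpNorm μ (fun x => (ρ x)⁻¹) p := by
    intro p hp
    refine mul_measureReal_rpow_le_lpNorm (f := fun x => (ρ x)⁻¹) (s := {x | ρ x < c})
      (by linarith) (by positivity) ?_ ?_
    · refine .of_bound (hρ.inv.abs.pow_const _).aestronglyMeasurable 1 (hρ₁.mono fun x hx => ?_)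
      rw [Real.norm_of_nonneg (by positivity), abs_inv, abs_of_pos (by linarith)]
      exact Real.rpow_le_one (by positivity) (inv_le_one_of_one_le₀ hx) (by linarith)
    · refine hρ₁.mono fun x hx hxc => ?_
      rw [abs_inv, abs_of_pos (by linarith)]
      exact inv_anti₀ (by linarith) (le_of_lt hxc)
  exact le_of_tendsto hlim <| (hM.and (hq.eventually_ge_atTop 1)).mono fun i hi =>
    (hlower _ hi.2).trans hi.1

theorem integral_inv_le_measureReal_sublevel_add [IsFiniteMeasure μ] {ρ : X → ℝ}
    (hρ : Measurable ρ) (hρ₁ : ∀ᵐ x ∂μ, 1 ≤ ρ x) {t : ℝ} (ht : 0 < t) :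
    ∫ x, (ρ x)⁻¹ ∂μ ≤ μ.real {x | ρ x < t} + μ.real Set.univ / t := by
  have hS : MeasurableSet {x | ρ x < t} := measurableSet_lt hρ measurable_const
  have hbound : ∀ᵐ x ∂μ, (ρ x)⁻¹ ≤ {x | ρ x < t}.indicator 1 x + t⁻¹ := hρ₁.mono fun x hx => by
    by_cases hxt : ρ x < t
    · simpa [hxt] using (inv_le_one_of_one_le₀ hx).trans (le_add_of_nonneg_right (by positivity))
    · simp [hxt, inv_anti₀ ht (not_lt.1 hxt)]
  have hint : Integrable (fun x => (ρ x)⁻¹) μ :=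
    .of_bound hρ.inv.aestronglyMeasurable 1 (hρ₁.mono fun x hx => by
      rw [Real.norm_of_nonneg (by positivity)]; exact inv_le_one_of_one_le₀ hx)
  calc ∫ x, (ρ x)⁻¹ ∂μ ≤ ∫ x, ({x | ρ x < t}.indicator 1 x + t⁻¹) ∂μ :=
        integral_mono_ae hint ((integrable_indicator_iff hS).2 (integrable_const _).integrableOn
          |>.add (integrable_const _)) hbound
    _ = μ.real {x | ρ x < t} + μ.real Set.univ / t := by
        rw [integral_add ((integrable_indicator_iff hS).2 (integrable_const _).integrableOn)
          (integrable_const _), integral_indicator_one hS, integral_const, smul_eq_mul, div_eq_mul_inv]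

end LpNorm

/-- Sublevel-set volume bound for a function normalized by its essential
infimum, under a Moser-iteration hypothesis. -/
theorem sublevel_volume_bound_of_moser
    {X : Type*} [MeasurableSpace X] (μ : Measure X) [IsFiniteMeasure μ]
    (n : ℕ) (hn : 2 ≤ n) (β : ℝ) (hβ : β = (n : ℝ) / ((n : ℝ) - 1))
    (V : ℝ) (hV : V = (μ Set.univ).toReal)
    (C₁ : ℝ) (hC₁ : 1 ≤ C₁)
    (ρ : X → ℝ) (hρmeas : Measurable ρ)
    (hρ1 : ∀ᵐ x ∂μ, 1 ≤ ρ x)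
    (hessinf : essInf ρ μ = 1)
    (H1 : ∀ p : ℝ, 1 ≤ p →
      lpNorm μ (fun x => (ρ x)⁻¹) (p * β)
        ≤ (p * C₁) ^ (1 / p) * lpNorm μ (fun x => (ρ x)⁻¹) p)
    (δ : ℝ) (hδ : δ = 1 / (2 * β ^ (n * (n - 1)) * C₁ ^ n)) :
    2 * δ ≤ ∫ x, (ρ x)⁻¹ ∂μ ∧ δ ≤ (μ {x | ρ x < V / δ}).toReal := by
  have hn' : (2 : ℝ) ≤ n := by exact_mod_cast hn
  have hβ₁ : 1 < β := by rw [hβ, one_lt_div] <;> linarith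
  have hB := moser_exponents_eq hn hβ C₁
  have hρinv : 0 ≤ᵐ[μ] fun x => (ρ x)⁻¹ := hρ1.mono fun x hx => inv_nonneg.2 (by linarith)
  have hI : 1 ≤ β ^ (n * (n - 1)) * C₁ ^ n * ∫ x, (ρ x)⁻¹ ∂μ := by
    refine one_le_of_eventually_lpNorm_inv_le hρmeas hρ1 hessinf
      (tendsto_pow_atTop_atTop_of_one_lt hβ₁) (.of_forall fun N => ?_)
    rw [← hB, ← lpNorm_one_of_nonneg hρinv]
    exact (lpNorm_pow_le_prod_mul_lpNorm_one hβ₁.le (by linarith) H1 N).trans <|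
      mul_le_mul_of_nonneg_right (moser_product_le hβ₁ hC₁ N) (lpNorm_nonneg _ _)
  have hδ₀ : 0 < δ := by rw [hδ]; positivity
  have hmass : 2 * δ ≤ ∫ x, (ρ x)⁻¹ ∂μ := by
    have h2δ : 2 * δ = 1 / (β ^ (n * (n - 1)) * C₁ ^ n) := by
      rw [hδ]; field_simp
    rwa [h2δ, div_le_iff₀' (by positivity)]
  refine ⟨hmass, ?_⟩
  have : NeZero μ := ⟨by rintro rfl; rw [integral_zero_measure] at hmass; linarith⟩
  have hV₀ : 0 < V := by rw [hV]; exact measureReal_univ_pos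
  have hsub := integral_inv_le_measureReal_sublevel_add hρmeas hρ1 (div_pos hV₀ hδ₀)
  rw [← measureReal_def] at hV ⊢
  rw [← hV, div_div_cancel₀ hV₀.ne'] at hsub
  linarith
end
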